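/- Dominance propagation used by the structured policy iteration algorithm (equation (20)): let V : 𝒬 → ℝ be monotone and let u ∈ 𝒰. Suppose Q, Q′ ∈ 𝒬 satisfy, for every (n,m) ∈ I, Q′_{n,m} ≥ Q_{n,m} if u_n = m and Q′_{n,m} = Q_{n,m} if u_n ≠ m. If Δ_{u,v}(Q) ≤ 0 for all v ∈ 𝒰 (i.e., u attains min_{v∈𝒰} J_V(Q,v)), then Δ_{u,v}(Q′) ≤ 0 for all v ∈ 𝒰 (i.e., u also attains min_{v∈𝒰} J_V(Q′,v)). -/

import Mathlib

/-!
Moving from `Q` to `Q'` only raises queues that `u` serves, and `u` resets every queue it serves,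
so `T(Q', u, A) = T(Q, u, A)`: the cost of `u` grows exactly by `d(Q') - d(Q)`. For any other
action `v`, the stage cost grows by the same amount and, `T` being monotone in the state and `V`
monotone, the expected continuation cost can only grow. Hence `Δ_{u,v}(Q') ≤ Δ_{u,v}(Q) ≤ 0`.
-/

open Finset

namespace HetNet

/-- The queue index set `I = {(n,m) : 0 ≤ n ≤ N, m ∈ M_n}`. -/
abbrev Idx {N M : ℕ} (cache : Fin (N + 1) → Finset (Fin M)) : Type :=
  {p : Fin (N + 1) × Fin M // p.2 ∈ cache p.1}

/-- The feasible action space `𝒰`: each BS schedules a cached content or idles (`none`),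
and the MBS (BS `0`) and the SBSs do not operate concurrently. -/
def Feasible {N M : ℕ} (cache : Fin (N + 1) → Finset (Fin M))
    (u : Fin (N + 1) → Option (Fin M)) : Prop :=
  (∀ n m, u n = some m → m ∈ cache n) ∧ (u 0 ≠ none → ∀ n, n ≠ 0 → u n = none)

instance {N M : ℕ} (cache : Fin (N + 1) → Finset (Fin M)) :
    DecidablePred (Feasible cache) := by
  intro u; unfold Feasible; infer_instance

instance {N M : ℕ} (cache : Fin (N + 1) → Finset (Fin M)) :
    Nonempty {u : Fin (N + 1) → Option (Fin M) // Feasible cache u} :=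
  ⟨⟨fun _ => none, by
    unfold Feasible
    exact ⟨fun _ _ h => (nomatch h), fun h => absurd rfl h⟩⟩⟩

/-- Queue `(n,m)` is served by action `u`. -/
def Served {N M : ℕ} (u : Fin (N + 1) → Option (Fin M)) (n : Fin (N + 1)) (m : Fin M) : Prop :=
  (n = 0 ∧ u 0 = some m) ∨ (n ≠ 0 ∧ (u 0 = some m ∨ u n = some m))

instance {N M : ℕ} (u : Fin (N + 1) → Option (Fin M)) (n : Fin (N + 1)) (m : Fin M) :
    Decidable (Served u n m) := by unfold Served; infer_instance

/-- The queue transition map `T(Q,u,A)`. -/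
def T {N M : ℕ} {cache : Fin (N + 1) → Finset (Fin M)} (bound : Idx cache → ℕ)
    (Q : Idx cache → ℕ) (u : Fin (N + 1) → Option (Fin M)) (A : Idx cache → ℕ) :
    Idx cache → ℕ := fun i =>
  if Served u i.val.1 i.val.2 then min (A i) (bound i) else min (Q i + A i) (bound i)

/-- The network power cost `p(u) = Σ_n p(n, u_n)` (with `p(n,0) = 0` for an idling BS). -/
def pcost {N M : ℕ} (p : Fin (N + 1) → Fin M → ℝ) (u : Fin (N + 1) → Option (Fin M)) : ℝ :=
  ∑ n, (u n).elim 0 (p n)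

/-- The sum request queue length `d(Q)`. -/
def dcost {N M : ℕ} {cache : Fin (N + 1) → Finset (Fin M)} (Q : Idx cache → ℕ) : ℝ :=
  ∑ i, (Q i : ℝ)

/-- The per-stage cost `g(Q,u) = d(Q) + w·p(u)`. -/
def gcost {N M : ℕ} (p : Fin (N + 1) → Fin M → ℝ) (w : ℝ)
    {cache : Fin (N + 1) → Finset (Fin M)}
    (Q : Idx cache → ℕ) (u : Fin (N + 1) → Option (Fin M)) : ℝ :=
  dcost Q + w * pcost p u

/-- The state-action cost `J_V(Q,u) = g(Q,u) + Σ_{A∈𝒜} P(A)·V(T(Q,u,A))`. -/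
def Jcost {N M : ℕ} (p : Fin (N + 1) → Fin M → ℝ) (w : ℝ)
    {cache : Fin (N + 1) → Finset (Fin M)} (bound : Idx cache → ℕ)
    {ι : Type} [Fintype ι] (P : ι → ℝ) (A : ι → Idx cache → ℕ)
    (V : (Idx cache → ℕ) → ℝ) (Q : Idx cache → ℕ)
    (u : Fin (N + 1) → Option (Fin M)) : ℝ :=
  gcost p w Q u + ∑ a, P a * V (T bound Q u (A a))

section Transition

variable {N M : ℕ} {cache : Fin (N + 1) → Finset (Fin M)}

theorem served_of_eq_some {u : Fin (N + 1) → Option (Fin M)} {n : Fin (N + 1)} {m : Fin M}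
    (h : u n = some m) : Served u n m := by
  by_cases hn : n = 0
  · exact Or.inl ⟨hn, hn ▸ h⟩
  · exact Or.inr ⟨hn, Or.inr h⟩

theorem T_le_bound (bound : Idx cache → ℕ) (Q : Idx cache → ℕ)
    (u : Fin (N + 1) → Option (Fin M)) (A : Idx cache → ℕ) (i : Idx cache) :
    T bound Q u A i ≤ bound i := by
  unfold T
  split <;> exact min_le_right _ _

theorem T_mono (bound : Idx cache → ℕ) {Q Q' : Idx cache → ℕ} (hQ : Q ≤ Q')
    (u : Fin (N + 1) → Option (Fin M)) (A : Idx cache → ℕ) :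
    T bound Q u A ≤ T bound Q' u A := by
  intro i
  unfold T
  split
  · exact le_rfl
  · exact min_le_min_right _ (Nat.add_le_add_right (hQ i) _)

theorem T_eq_of_eq_of_not_scheduled (bound : Idx cache → ℕ) {Q Q' : Idx cache → ℕ}
    {u : Fin (N + 1) → Option (Fin M)}
    (hQ : ∀ i : Idx cache, u i.val.1 ≠ some i.val.2 → Q' i = Q i) :
    T bound Q' u = T bound Q u := by
  funext A i
  unfold T
  split
  · rfl
  · next hserved => rw [hQ i fun h => hserved (served_of_eq_some h)]

theorem sum_mul_V_T_mono (bound : Idx cache → ℕ) {ι : Type} [Fintype ι] {P : ι → ℝ}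
    (hP : ∀ a, 0 ≤ P a) (A : ι → Idx cache → ℕ) {V : (Idx cache → ℕ) → ℝ}
    (hV : ∀ Q₁ Q₂ : Idx cache → ℕ, (∀ i, Q₁ i ≤ bound i) → (∀ i, Q₂ i ≤ bound i) →
      (∀ i, Q₁ i ≤ Q₂ i) → V Q₁ ≤ V Q₂)
    {Q Q' : Idx cache → ℕ} (hQ : Q ≤ Q') (v : Fin (N + 1) → Option (Fin M)) :
    ∑ a, P a * V (T bound Q v (A a)) ≤ ∑ a, P a * V (T bound Q' v (A a)) :=
  Finset.sum_le_sum fun a _ => mul_le_mul_of_nonneg_left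
    (hV _ _ (T_le_bound bound Q v _) (T_le_bound bound Q' v _) (T_mono bound hQ v _)) (hP a)

theorem Jcost_sub_le_of_T_eq (p : Fin (N + 1) → Fin M → ℝ) (w : ℝ) (bound : Idx cache → ℕ)
    {ι : Type} [Fintype ι] {P : ι → ℝ} (hP : ∀ a, 0 ≤ P a) (A : ι → Idx cache → ℕ)
    {V : (Idx cache → ℕ) → ℝ}
    (hV : ∀ Q₁ Q₂ : Idx cache → ℕ, (∀ i, Q₁ i ≤ bound i) → (∀ i, Q₂ i ≤ bound i) →
      (∀ i, Q₁ i ≤ Q₂ i) → V Q₁ ≤ V Q₂)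
    {Q Q' : Idx cache → ℕ} (hQ : Q ≤ Q') {u : Fin (N + 1) → Option (Fin M)}
    (hTu : T bound Q' u = T bound Q u) (v : Fin (N + 1) → Option (Fin M)) :
    Jcost p w bound P A V Q' u - Jcost p w bound P A V Q' v ≤
      Jcost p w bound P A V Q u - Jcost p w bound P A V Q v := by
  have hcont := sum_mul_V_T_mono bound hP A hV hQ v
  simp only [Jcost, gcost, hTu]
  linarith

end Transition

theorem dominance_propagation_general {N M : ℕ} (cache : Fin (N + 1) → Finset (Fin M))
    (bound : Idx cache → ℕ)
    (p : Fin (N + 1) → Fin M → ℝ)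
    (w : ℝ)
    {ι : Type} [Fintype ι] (P : ι → ℝ) (A : ι → Idx cache → ℕ)
    (hP : ∀ a, 0 ≤ P a)
    (V : (Idx cache → ℕ) → ℝ)
    (hV : ∀ Q₁ Q₂ : Idx cache → ℕ, (∀ i, Q₁ i ≤ bound i) → (∀ i, Q₂ i ≤ bound i) →
      (∀ i, Q₁ i ≤ Q₂ i) → V Q₁ ≤ V Q₂)
    (u : Fin (N + 1) → Option (Fin M))
    (Q Q' : Idx cache → ℕ)
    (hcond : ∀ i : Idx cache,
      (u i.val.1 = some i.val.2 → Q i ≤ Q' i) ∧ (u i.val.1 ≠ some i.val.2 → Q' i = Q i))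
    (hdom : ∀ v, Feasible cache v →
      Jcost p w bound P A V Q u - Jcost p w bound P A V Q v ≤ 0) :
    ∀ v, Feasible cache v →
      Jcost p w bound P A V Q' u - Jcost p w bound P A V Q' v ≤ 0 := by
  intro v hv
  have hle : Q ≤ Q' := fun i => by
    by_cases h : u i.val.1 = some i.val.2
    · exact (hcond i).1 h
    · exact ((hcond i).2 h).ge
  have hTu := T_eq_of_eq_of_not_scheduled bound fun i => (hcond i).2
  exact (Jcost_sub_le_of_T_eq p w bound hP A hV hle hTu v).trans (hdom v hv)

/-- dominance propagation, equation (20): let `V` be monotone and `u ∈ 𝒰`.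
Suppose `Q, Q′ ∈ 𝒬` satisfy, for every `(n,m) ∈ I`, `Q′_{n,m} ≥ Q_{n,m}` if `u_n = m` and
`Q′_{n,m} = Q_{n,m}` if `u_n ≠ m`.  If `Δ_{u,v}(Q) ≤ 0` for all `v ∈ 𝒰`, then
`Δ_{u,v}(Q′) ≤ 0` for all `v ∈ 𝒰`. -/
theorem dominance_propagation {N M : ℕ} (cache : Fin (N + 1) → Finset (Fin M))
    (hcache0 : ∀ m : Fin M, m ∈ cache 0)
    (bound : Idx cache → ℕ)
    (p : Fin (N + 1) → Fin M → ℝ) (hp : ∀ n m, 0 ≤ p n m)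
    (w : ℝ) (hw : 0 ≤ w)
    {ι : Type} [Fintype ι] (P : ι → ℝ) (A : ι → Idx cache → ℕ)
    (hP : ∀ a, 0 ≤ P a) (hPsum : ∑ a, P a = 1)
    (V : (Idx cache → ℕ) → ℝ)
    (hV : ∀ Q₁ Q₂ : Idx cache → ℕ, (∀ i, Q₁ i ≤ bound i) → (∀ i, Q₂ i ≤ bound i) →
      (∀ i, Q₁ i ≤ Q₂ i) → V Q₁ ≤ V Q₂)
    (u : Fin (N + 1) → Option (Fin M)) (hu : Feasible cache u)
    (Q Q' : Idx cache → ℕ)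
    (hQ : ∀ i, Q i ≤ bound i) (hQ' : ∀ i, Q' i ≤ bound i)
    (hcond : ∀ i : Idx cache,
      (u i.val.1 = some i.val.2 → Q i ≤ Q' i) ∧ (u i.val.1 ≠ some i.val.2 → Q' i = Q i))
    (hdom : ∀ v, Feasible cache v →
      Jcost p w bound P A V Q u - Jcost p w bound P A V Q v ≤ 0) :
    ∀ v, Feasible cache v →
      Jcost p w bound P A V Q' u - Jcost p w bound P A V Q' v ≤ 0 :=
  dominance_propagation_general cache bound p w P A hP V hV u Q Q' hcond hdom

end HetNet
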